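/- Let c be an integer with c ≥ 3 and c ≢ 1 (mod 3). Then there is exactly one numerical semigroup with the Arf property having multiplicity 3 and conductor c, namely: S = ⟨3, c+1, c+2⟩ if c ≡ 0 (mod 3), and S = ⟨3, c, c+2⟩ if c ≡ 2 (mod 3). -/

import Mathlib

/-- A numerical semigroup: a subset of ℕ containing 0, closed under addition,
with finite complement. -/
def IsNumericalSemigroup (S : Set ℕ) : Prop :=
  0 ∈ S ∧ (∀ a ∈ S, ∀ b ∈ S, a + b ∈ S) ∧ Sᶜ.Finite

/-- The Arf property: for all x ≥ y ≥ z in S, x + y - z ∈ S. -/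
def HasArfProperty (S : Set ℕ) : Prop :=
  ∀ x ∈ S, ∀ y ∈ S, ∀ z ∈ S, z ≤ y → y ≤ x → x + y - z ∈ S

/-- The conductor: the least c such that every n ≥ c lies in S. -/
noncomputable def conductorOf (S : Set ℕ) : ℕ := sInf {c | ∀ n, c ≤ n → n ∈ S}

/-- The Frobenius number: the largest natural number not in S. -/
noncomputable def frobeniusOf (S : Set ℕ) : ℕ := sSup {n | n ∉ S}

/-- The genus: the number of gaps of S. -/
noncomputable def genusOf (S : Set ℕ) : ℕ := Sᶜ.ncard

/-- The multiplicity: the least positive element of S. -/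
noncomputable def multiplicityOf (S : Set ℕ) : ℕ := sInf {n | n ∈ S ∧ 0 < n}

/-- w(i) = min { s ∈ S : s ≡ i (mod m) }. -/
noncomputable def aperyW (S : Set ℕ) (m i : ℕ) : ℕ := sInf {s | s ∈ S ∧ s % m = i}

/-- The cocycle h(i,j) = (w(i) + w(j) - w((i+j) mod m)) / m, as a rational number. -/
noncomputable def cocycle (S : Set ℕ) (m i j : ℕ) : ℚ :=
  ((aperyW S m i : ℚ) + (aperyW S m j : ℚ) - (aperyW S m ((i + j) % m) : ℚ)) / (m : ℚ)

/-- An Arf sequence (x₁, …, xₙ), 0-indexed: xₙ ≥ ⋯ ≥ x₁ ≥ 2, and each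
x_{i+1} is either a sum x_i + ⋯ + x_j for some j ≤ i, or at least x_i + ⋯ + x₁. -/
def ArfSeq (n : ℕ) (x : Fin n → ℕ) : Prop :=
  1 ≤ n ∧ Monotone x ∧ (∀ i, 2 ≤ x i) ∧
  ∀ i : Fin n, ∀ h : i.1 + 1 < n,
    (∃ j : Fin n, j ≤ i ∧ x ⟨i.1 + 1, h⟩ = ∑ k ∈ Finset.Icc j i, x k) ∨
    (∑ k ∈ Finset.Iic i, x k) ≤ x ⟨i.1 + 1, h⟩

/-- The set S(x₁,…,xₙ) = {0} ∪ {xₙ + ⋯ + x_k : 1 ≤ k ≤ n} ∪ {z : z ≥ x₁ + ⋯ + xₙ}. -/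
def arfSet (n : ℕ) (x : Fin n → ℕ) : Set ℕ :=
  {z | z = 0 ∨ (∃ k : Fin n, z = ∑ i ∈ Finset.Ici k, x i) ∨ (∑ i, x i) ≤ z}

/-- The numerical-semigroup-like set generated by A ⊆ ℕ. -/
def genNS (A : Set ℕ) : Set ℕ := (AddSubmonoid.closure A : Set ℕ)


/-!
If `S` is Arf and `3 ∈ S`, then for every `n ∈ S` with `3 ∤ n`, the Arf property applied to
`n ≥ n ≥ 3 ⌊n / 3⌋` gives `n + n % 3 ∈ S`. Together with `n` and the multiples of `3` this meets
every residue class mod `3`, so every integer `≥ n` lies in `S`. Hence below its conductor `c` an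
Arf semigroup containing `3` has only multiples of `3`, i.e. `S = 3ℕ ∪ [c, ∞)`. Conversely this set
is Arf, has multiplicity `3` once `c ≥ 3`, has conductor exactly `c` when `3 ∤ c - 1`, and is
generated by `3` together with its elements in `[c, c + 3)` that are not multiples of `3`.
-/

def threeMulOrGe (c : ℕ) : Set ℕ := {n | 3 ∣ n ∨ c ≤ n}

variable {S : Set ℕ} {c n : ℕ}

namespace IsNumericalSemigroup

def toAddSubmonoid (hS : IsNumericalSemigroup S) : AddSubmonoid ℕ where
  carrier := S
  add_mem' ha hb := hS.2.1 _ ha _ hb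
  zero_mem' := hS.1

lemma mem_of_conductorOf_le (hS : IsNumericalSemigroup S) (hn : conductorOf S ≤ n) : n ∈ S := by
  obtain ⟨b, hb⟩ := hS.2.2.bddAbove
  have hne : {k | ∀ m, k ≤ m → m ∈ S}.Nonempty :=
    ⟨b + 1, fun m hm => by_contra fun hmS => by have := hb hmS; omega⟩
  exact Nat.sInf_mem hne n hn

lemma nonempty_pos (hS : IsNumericalSemigroup S) : {n | n ∈ S ∧ 0 < n}.Nonempty := by
  have hinf : S.Infinite := by simpa using hS.2.2.infinite_compl
  exact hinf.exists_gt 0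

lemma multiplicityOf_mem (hS : IsNumericalSemigroup S) : multiplicityOf S ∈ S :=
  (Nat.sInf_mem hS.nonempty_pos).1

lemma multiplicityOf_pos (hS : IsNumericalSemigroup S) : 0 < multiplicityOf S :=
  (Nat.sInf_mem hS.nonempty_pos).2

end IsNumericalSemigroup

lemma conductorOf_le (h : ∀ m, n ≤ m → m ∈ S) : conductorOf S ≤ n := Nat.sInf_le h

lemma multiplicityOf_le (hn : n ∈ S) (hpos : 0 < n) : multiplicityOf S ≤ n :=
  Nat.sInf_le ⟨hn, hpos⟩

lemma AddSubmonoid.mem_of_dvd {M : AddSubmonoid ℕ} {m : ℕ} (hm : m ∈ M) (hn : m ∣ n) : n ∈ M := by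
  obtain ⟨k, rfl⟩ := hn
  simpa [mul_comm] using AddSubmonoid.nsmul_mem M hm k

lemma threeMulOrGe_subset {M : AddSubmonoid ℕ} (h3 : 3 ∈ M)
    (hcover : ∀ n ∈ Set.Ico c (c + 3), 3 ∣ n ∨ n ∈ M) : threeMulOrGe c ⊆ M := by
  rintro n (hn | hn)
  · exact AddSubmonoid.mem_of_dvd h3 hn
  · set r := c + (n - c) % 3
    have hr : r ∈ M := (hcover r ⟨by omega, by omega⟩).elim (AddSubmonoid.mem_of_dvd h3) id
    have hn_eq : n = r + 3 * ((n - c) / 3) := by omega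
    rw [hn_eq]
    exact add_mem hr (AddSubmonoid.mem_of_dvd h3 (dvd_mul_right 3 _))

namespace HasArfProperty

lemma add_mod_mem (hArf : HasArfProperty S) (hS : IsNumericalSemigroup S) {m : ℕ} (hm : m ∈ S)
    (hn : n ∈ S) : n + n % m ∈ S := by
  have hz : m * (n / m) ∈ S :=
    AddSubmonoid.mem_of_dvd (M := hS.toAddSubmonoid) hm (dvd_mul_right m _)
  have h := hArf n hn n hn _ hz (Nat.mul_div_le n m) le_rfl
  rwa [show n + n - m * (n / m) = n + n % m by have := Nat.mod_add_div n m; omega] at h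

lemma conductorOf_le_of_not_three_dvd (hArf : HasArfProperty S) (hS : IsNumericalSemigroup S)
    (h3 : 3 ∈ S) (hn : n ∈ S) (hn3 : ¬ 3 ∣ n) : conductorOf S ≤ n := by
  have hn' := hArf.add_mod_mem hS h3 hn
  refine conductorOf_le fun m hm => threeMulOrGe_subset (M := hS.toAddSubmonoid) h3 ?_ (.inr hm)
  rintro k ⟨hk, hk'⟩
  rcases (by omega : k = n ∨ k = n + n % 3 ∨ 3 ∣ k) with rfl | rfl | hk3
  exacts [.inr hn, .inr hn', .inl hk3]

theorem eq_threeMulOrGe_conductorOf (hArf : HasArfProperty S) (hS : IsNumericalSemigroup S)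
    (h3 : 3 ∈ S) : S = threeMulOrGe (conductorOf S) := by
  ext n
  constructor
  · intro hn
    by_cases hn3 : 3 ∣ n
    · exact .inl hn3
    · exact .inr (hArf.conductorOf_le_of_not_three_dvd hS h3 hn hn3)
  · rintro (hn | hn)
    · exact AddSubmonoid.mem_of_dvd (M := hS.toAddSubmonoid) h3 hn
    · exact hS.mem_of_conductorOf_le hn

end HasArfProperty

lemma isNumericalSemigroup_threeMulOrGe (c : ℕ) : IsNumericalSemigroup (threeMulOrGe c) := by
  refine ⟨.inl (dvd_zero 3), fun a ha b hb => ?_, (Set.finite_Iio c).subset fun n hn => ?_⟩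
  · simp only [threeMulOrGe, Set.mem_ofPred_eq] at *
    omega
  · simp only [threeMulOrGe, Set.mem_compl_iff, Set.mem_ofPred_eq, Set.mem_Iio] at *
    omega

lemma hasArfProperty_threeMulOrGe (c : ℕ) : HasArfProperty (threeMulOrGe c) := by
  intro x hx y hy z hz hzy hyx
  simp only [threeMulOrGe, Set.mem_ofPred_eq] at *
  omega

lemma multiplicityOf_threeMulOrGe (hc : 3 ≤ c) : multiplicityOf (threeMulOrGe c) = 3 := by
  have hT := isNumericalSemigroup_threeMulOrGe c
  have hle : multiplicityOf (threeMulOrGe c) ≤ 3 :=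
    multiplicityOf_le (.inl (dvd_refl 3)) (by norm_num)
  have hpos := hT.multiplicityOf_pos
  rcases hT.multiplicityOf_mem with h | h <;> omega

lemma conductorOf_threeMulOrGe (hc : c % 3 ≠ 1) : conductorOf (threeMulOrGe c) = c := by
  refine le_antisymm (conductorOf_le fun n => .inr) (not_lt.mp fun hlt => ?_)
  have := (isNumericalSemigroup_threeMulOrGe c).mem_of_conductorOf_le (n := c - 1) (by omega)
  simp only [threeMulOrGe, Set.mem_ofPred_eq] at this
  omega

lemma genNS_eq_threeMulOrGe {A : Set ℕ} (hA : A ⊆ threeMulOrGe c) (h3 : 3 ∈ A)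
    (hcover : ∀ n ∈ Set.Ico c (c + 3), 3 ∣ n ∨ n ∈ A) : genNS A = threeMulOrGe c :=
  le_antisymm
    (AddSubmonoid.closure_le (S := (isNumericalSemigroup_threeMulOrGe c).toAddSubmonoid).mpr hA)
    (threeMulOrGe_subset (AddSubmonoid.subset_closure h3) fun n hn =>
      (hcover n hn).imp_right fun h => AddSubmonoid.subset_closure h)

lemma genNS_three_add_one_add_two (hc : c % 3 = 0) :
    genNS {3, c + 1, c + 2} = threeMulOrGe c := by
  refine genNS_eq_threeMulOrGe ?_ (by simp) fun n ⟨_, _⟩ => ?_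
  · rintro a (rfl | rfl | rfl) <;> simp only [threeMulOrGe, Set.mem_ofPred_eq] <;> omega
  · simp only [Set.mem_insert_iff, Set.mem_singleton_iff]
    omega

lemma genNS_three_self_add_two (hc : c % 3 = 2) :
    genNS {3, c, c + 2} = threeMulOrGe c := by
  refine genNS_eq_threeMulOrGe ?_ (by simp) fun n ⟨_, _⟩ => ?_
  · rintro a (rfl | rfl | rfl) <;> simp only [threeMulOrGe, Set.mem_ofPred_eq] <;> omega
  · simp only [Set.mem_insert_iff, Set.mem_singleton_iff]
    omega

theorem arf_multiplicity_three (c : ℕ) (hc : 3 ≤ c) (h1 : c % 3 ≠ 1) :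
    ∀ S : Set ℕ,
      (IsNumericalSemigroup S ∧ HasArfProperty S ∧
        multiplicityOf S = 3 ∧ conductorOf S = c) ↔
      ((c % 3 = 0 ∧ S = genNS {3, c + 1, c + 2}) ∨
       (c % 3 = 2 ∧ S = genNS {3, c, c + 2})) := by
  intro S
  have hT : IsNumericalSemigroup (threeMulOrGe c) ∧ HasArfProperty (threeMulOrGe c) ∧
      multiplicityOf (threeMulOrGe c) = 3 ∧ conductorOf (threeMulOrGe c) = c :=
    ⟨isNumericalSemigroup_threeMulOrGe c, hasArfProperty_threeMulOrGe c,
      multiplicityOf_threeMulOrGe hc, conductorOf_threeMulOrGe h1⟩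
  constructor
  · rintro ⟨hS, hArf, hm, hcond⟩
    have hS_eq := hArf.eq_threeMulOrGe_conductorOf hS (hm ▸ hS.multiplicityOf_mem)
    rw [hcond] at hS_eq
    rcases (by omega : c % 3 = 0 ∨ c % 3 = 2) with h | h
    · exact .inl ⟨h, hS_eq.trans (genNS_three_add_one_add_two h).symm⟩
    · exact .inr ⟨h, hS_eq.trans (genNS_three_self_add_two h).symm⟩
  · rintro (⟨h, rfl⟩ | ⟨h, rfl⟩)
    · rwa [genNS_three_add_one_add_two h]
    · rwa [genNS_three_self_add_two h]
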